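/- Assume r ≥ 2. The element (r_0 r_1 ⋯ r_{r-1} r_r)^{-(r-1)} · (r_{r-1} r_{r-2} ⋯ r_1) of W commutes with s_0. -/

import Mathlib

noncomputable section

open CoxeterSystem
open Fin.NatCast

/-- The Coxeter matrix of the affine Weyl group of type `Ã_{2r}`:
vertices `0, …, 2r` arranged in a cycle mod `N = 2r+1`; `m i j = 3` if
`i - j ≡ ±1 (mod N)`, `m i j = 2` for other off-diagonal pairs. -/
def affACoxeterMatrix (r : ℕ) : CoxeterMatrix (Fin (2 * r + 1)) where
  M i j := if i = j then 1 else if i = j + 1 ∨ j = i + 1 then 3 else 2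
  isSymm := by
    apply Matrix.IsSymm.ext
    intro i j
    by_cases h : j = i
    · subst h; rfl
    · rw [if_neg h, if_neg (fun hh : i = j => h hh.symm)]
      exact if_congr or_comm rfl rfl
  diagonal i := if_pos rfl
  off_diagonal i j h := by
    try dsimp only
    rw [if_neg h]
    split <;> omega

/-- The affine Weyl group `W` of type `Ã_{2r}`, as the Coxeter group of the above matrix. -/
abbrev AffW (r : ℕ) : Type := (affACoxeterMatrix r).Group

/-- The canonical Coxeter system on `AffW r`. -/
def affCS (r : ℕ) : CoxeterSystem (affACoxeterMatrix r) (AffW r) :=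
  (affACoxeterMatrix r).toCoxeterSystem

/-- The simple reflection `s i` (index taken mod `2r+1`). -/
def sgen (r i : ℕ) : AffW r := (affCS r).simple ((i : ℕ) : Fin (2 * r + 1))

/-- The word in the simple reflections representing the generator `r_i` of the
relative Weyl group: `r_0 = s_0`, `r_i = s_i s_{2r+1-i}` for `1 ≤ i ≤ r-1`,
`r_r = s_r s_{r+1} s_r`. -/
def rword (r : ℕ) : ℕ → List (Fin (2 * r + 1)) := fun i =>
  if i = 0 then [(0 : Fin (2 * r + 1))]
  else if i < r then [((i : ℕ) : Fin (2 * r + 1)), ((2 * r + 1 - i : ℕ) : Fin (2 * r + 1))]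
  else [((r : ℕ) : Fin (2 * r + 1)), ((r + 1 : ℕ) : Fin (2 * r + 1)), ((r : ℕ) : Fin (2 * r + 1))]

/-- The element `r_i` of `W`. -/
def rgen (r i : ℕ) : AffW r := (affCS r).wordProd (rword r i)

/-- The list `[a, a+1, …, b]` (empty if `b < a`). -/
def ascSeq (a b : ℕ) : List ℕ := List.range' a (b + 1 - a)

/-- The list `[b, b-1, …, a]` (empty if `b < a`). -/
def descSeq (a b : ℕ) : List ℕ := (List.range' a (b + 1 - a)).reverse

/-- The expansion, as a word in the simple reflections, of the block
`r_0 r_1 ⋯ r_{r-1} r_r r_{r-1} ⋯ r_k`. -/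
def blockWord (r k : ℕ) : List (Fin (2 * r + 1)) :=
  ((ascSeq 0 r ++ descSeq k (r - 1)).map (rword r)).flatten

/-- The element `r_0 r_1 ⋯ r_{r-1} r_r r_{r-1} ⋯ r_k` of `W`. -/
def blockEl (r k : ℕ) : AffW r := (affCS r).wordProd (blockWord r k)

/-- The expansion, as a word in the simple reflections, of
`ϖ_k = (r_0 r_1 ⋯ r_{r-1} r_r r_{r-1} ⋯ r_k)^k`. -/
def piWord (r k : ℕ) : List (Fin (2 * r + 1)) :=
  (List.replicate k (blockWord r k)).flatten

/-- The element `ϖ_k = (r_0 r_1 ⋯ r_{r-1} r_r r_{r-1} ⋯ r_k)^k` of `W`. -/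
def piEl (r k : ℕ) : AffW r := (affCS r).wordProd (piWord r k)

/-- The expansion of the full block `r_0 r_1 ⋯ r_{r-1} r_r` as a word. -/
def fullBlockWord (r : ℕ) : List (Fin (2 * r + 1)) :=
  ((ascSeq 0 r).map (rword r)).flatten

/-- The element `r_0 r_1 ⋯ r_{r-1} r_r` of `W`. -/
def fullBlockEl (r : ℕ) : AffW r := (affCS r).wordProd (fullBlockWord r)

/-!
Write `U_k` for the reflection `s_{-k} ⋯ s_{k-1} s_k s_{k-1} ⋯ s_{-k}` (indices mod `2r+1`); it
swaps `-k` and `k+1`, and `U_0 = s_0`. Conjugation by `r_{k+1}` sends `U_k` to `U_{k+1}`, and so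
does conjugation by the block `r_0 r_1 ⋯ r_r`: each of its other factors `r_j` commutes with the
relevant reflection, because its letters lie either outside the support of `U_k` (`j ≥ k+2`) or
strictly inside that of `U_{k+1}` (`j ≤ k`). Hence `r_{r-1} ⋯ r_1` and `(r_0 ⋯ r_r)^{r-1}` both
conjugate `s_0` to `U_{r-1}`, so `(r_0 ⋯ r_r)^{-(r-1)} r_{r-1} ⋯ r_1` centralises `s_0`. All these
relations live in a window of `2r` consecutive nodes of the cycle, a Dynkin diagram of type
`A_{2r}`.
-/

section TypeAChain

variable {G : Type*} [Group G]

structure IsTypeAChain (s : ℕ → G) (n : ℕ) : Prop where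
  braid : ∀ i, i + 1 < n → s i * s (i + 1) * s i = s (i + 1) * s i * s (i + 1)
  commute : ∀ i j, i + 2 ≤ j → j < n → Commute (s i) (s j)

namespace IsTypeAChain

variable {s : ℕ → G} {n : ℕ}

theorem shift (h : IsTypeAChain s (n + 1)) : IsTypeAChain (fun i => s (i + 1)) n where
  braid i hi := h.braid (i + 1) (by omega)
  commute i j hij hj := h.commute (i + 1) (j + 1) (by omega) (by omega)

theorem mono {m : ℕ} (h : IsTypeAChain s n) (hmn : m ≤ n) : IsTypeAChain s m where
  braid i hi := h.braid i (by omega)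
  commute i j hij hj := h.commute i j hij (by omega)

end IsTypeAChain

/-- `s 0 ⋯ s (m-1) * s m * s (m-1) ⋯ s 0`, the transposition `(0 m+1)` when `s` are the Coxeter
generators of a symmetric group. -/
def chainRefl (s : ℕ → G) : ℕ → G
  | 0 => s 0
  | m + 1 => s 0 * chainRefl (fun i => s (i + 1)) m * s 0

theorem chainRefl_succ (s : ℕ → G) (m : ℕ) :
    chainRefl s (m + 1) = s 0 * chainRefl (fun i => s (i + 1)) m * s 0 := rfl

theorem IsTypeAChain.chainRefl_succ_eq_conj {s : ℕ → G} {m : ℕ} (h : IsTypeAChain s (m + 2)) :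
    chainRefl s (m + 1) = s (m + 1) * chainRefl s m * s (m + 1) := by
  induction m generalizing s with
  | zero => exact h.braid 0 (by omega)
  | succ m ih =>
    have hc : Commute (s 0) (s (m + 2)) := h.commute 0 (m + 2) (by omega) (by omega)
    rw [chainRefl_succ, ih h.shift, chainRefl_succ]
    simp only [mul_assoc]
    rw [hc.symm.eq, ← mul_assoc (s 0), hc.eq, mul_assoc]

theorem Commute.chainRefl {g : G} {s : ℕ → G} {m : ℕ} (h : ∀ i ≤ m, Commute g (s i)) :
    Commute g (chainRefl s m) := by
  induction m generalizing s with
  | zero => exact h 0 le_rfl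
  | succ m ih =>
    have h0 := h 0 (Nat.zero_le _)
    exact (h0.mul_right (ih fun i hi => h (i + 1) (by omega))).mul_right h0

theorem IsTypeAChain.commute_chainRefl {s : ℕ → G} {m t : ℕ} (h : IsTypeAChain s (m + 1))
    (ht : 0 < t) (htm : t < m) : Commute (s t) (chainRefl s m) := by
  induction m using Nat.strong_induction_on generalizing s t with
  | _ m ih =>
  match m, t, ht, htm with
  | 2, 1, _, _ =>
    have b01 : s 0 * s 1 * s 0 = s 1 * s 0 * s 1 := h.braid 0 (by omega)
    have c02 := h.commute 0 2 le_rfl (by omega)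
    show s 1 * (s 0 * (s 1 * s 2 * s 1) * s 0) = s 0 * (s 1 * s 2 * s 1) * s 0 * s 1
    calc s 1 * (s 0 * (s 1 * s 2 * s 1) * s 0)
        = s 1 * s 0 * s 1 * (s 2 * (s 1 * s 0)) := by simp only [mul_assoc]
      _ = s 0 * s 1 * (s 0 * s 2) * (s 1 * s 0) := by rw [← b01]; simp only [mul_assoc]
      _ = s 0 * (s 1 * s 2) * (s 0 * s 1 * s 0) := by rw [c02.eq]; simp only [mul_assoc]
      _ = s 0 * (s 1 * s 2 * s 1) * s 0 * s 1 := by rw [b01]; simp only [mul_assoc]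
  | m + 3, 1, _, _ =>
    have c : Commute (s 1) (s (m + 3)) := h.commute 1 (m + 3) (by omega) (by omega)
    rw [IsTypeAChain.chainRefl_succ_eq_conj (m := m + 2) h]
    have := ih (m + 2) (by omega) (h.mono (by omega)) Nat.one_pos (by omega)
    exact (c.mul_right this).mul_right c
  | m + 3, t + 2, _, _ =>
    have c0 : Commute (s (t + 2)) (s 0) := (h.commute 0 (t + 2) (by omega) (by omega)).symm
    have := ih (m + 2) (by omega) h.shift (t := t + 1) (by omega) (by omega)
    rw [chainRefl_succ]
    exact (c0.mul_right this).mul_right c0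
  | 0, _, _, _ | 1, _, _, _ | 2, _ + 2, _, _ => omega

end TypeAChain

theorem Fin.natCast_add_ne_natCast {N : ℕ} [NeZero N] (x d : ℕ) (h0 : 0 < d) (hd : d < N) :
    ((x + d : ℕ) : Fin N) ≠ (x : Fin N) := by
  rw [Nat.cast_add, Ne, add_eq_left, Fin.natCast_eq_zero]
  exact fun h => h0.ne' (Nat.eq_zero_of_dvd_of_lt h hd)

namespace CoxeterSystem

variable {B W : Type*} [Group W] {M : CoxeterMatrix B} (cs : CoxeterSystem M W) {i i' : B}

theorem commute_simple_of_M_eq_two (h : M i i' = 2) : Commute (cs.simple i) (cs.simple i') := by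
  have := cs.wordProd_braidWord_eq i i'
  rw [braidWord, braidWord, M.symmetric i' i, h] at this
  rw [Commute, SemiconjBy]
  simpa [alternatingWord, wordProd] using this

theorem simple_braid_of_M_eq_three (h : M i i' = 3) :
    cs.simple i * cs.simple i' * cs.simple i = cs.simple i' * cs.simple i * cs.simple i' := by
  have := cs.wordProd_braidWord_eq i i'
  rw [braidWord, braidWord, M.symmetric i' i, h] at this
  simpa [alternatingWord, wordProd, mul_assoc] using this.symm

end CoxeterSystem

section AffineA

variable {r : ℕ}

theorem affACoxeterMatrix_natCast_succ_eq_three (hr : 0 < r) (x : ℕ) :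
    affACoxeterMatrix r x (x + 1 : ℕ) = 3 := by
  have hne := Fin.natCast_add_ne_natCast (N := 2 * r + 1) x 1 one_pos (by omega)
  show (if _ then _ else _) = 3
  rw [if_neg (Ne.symm hne), if_pos (Or.inr (Nat.cast_succ x))]

theorem affACoxeterMatrix_natCast_add_eq_two (x d : ℕ) (hd : 2 ≤ d) (hdr : d < 2 * r) :
    affACoxeterMatrix r x (x + d : ℕ) = 2 := by
  have h0 := Fin.natCast_add_ne_natCast (N := 2 * r + 1) x d (by omega) (by omega)
  have h1 := Fin.natCast_add_ne_natCast (N := 2 * r + 1) x (d + 1) (by omega) (by omega)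
  have h2 := Fin.natCast_add_ne_natCast (N := 2 * r + 1) (x + 1) (d - 1) (by omega) (by omega)
  show (if _ then _ else _) = 2
  rw [if_neg (Ne.symm h0), if_neg]
  rintro (h | h)
  · exact h1 (by rw [← add_assoc, Nat.cast_succ, ← h])
  · exact h2 (by rw [Nat.cast_succ, ← h]; congr 1; omega)

theorem sgen_add_period (r i : ℕ) : sgen r (2 * r + 1 + i) = sgen r i := by
  rw [sgen, Nat.cast_add, Fin.natCast_self, zero_add, sgen]

theorem isTypeAChain_sgen (r a : ℕ) : IsTypeAChain (fun i => sgen r (a + i)) (2 * r) where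
  braid i hi :=
    (affCS r).simple_braid_of_M_eq_three (affACoxeterMatrix_natCast_succ_eq_three (by omega) _)
  commute i j hij hj := by
    have hM := affACoxeterMatrix_natCast_add_eq_two (r := r) (a + i) (j - i) (by omega) (by omega)
    rw [show a + i + (j - i) = a + j by omega] at hM
    exact (affCS r).commute_simple_of_M_eq_two hM

theorem rgen_zero : rgen r 0 = sgen r 0 := by
  simp [rgen, rword, sgen]

theorem rgen_of_pos_of_lt {j : ℕ} (h0 : 0 < j) (hj : j < r) :
    rgen r j = sgen r j * sgen r (2 * r + 1 - j) := by
  simp [rgen, rword, sgen, h0.ne', hj, (affCS r).wordProd_cons]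

theorem rgen_self (hr : 0 < r) : rgen r r = sgen r r * sgen r (r + 1) * sgen r r := by
  simp [rgen, rword, sgen, hr.ne', (affCS r).wordProd_cons, mul_assoc]

/-- `U_k`, with the letter `s_{-k+i}` written as `sgen r (2r+1-k+i)`. -/
def reflU (r k : ℕ) : AffW r := chainRefl (fun i => sgen r (2 * r + 1 - k + i)) (2 * k)

theorem reflU_zero : reflU r 0 = sgen r 0 := sgen_add_period r 0

theorem commute_sgen_reflU_of_far {c k : ℕ} (hc : k + 2 ≤ c) (hck : c + k + 1 ≤ 2 * r) :
    Commute (sgen r c) (reflU r k) := by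
  refine Commute.chainRefl fun i hi => ?_
  have h := (isTypeAChain_sgen r c).commute 0 (2 * r + 1 - k + i - c) (by omega) (by omega)
  rwa [add_zero, show c + (2 * r + 1 - k + i - c) = 2 * r + 1 - k + i by omega] at h

theorem commute_sgen_reflU_of_interior {k t : ℕ} (hk : k < r) (ht : 0 < t) (htk : t < 2 * k) :
    Commute (sgen r (2 * r + 1 - k + t)) (reflU r k) :=
  ((isTypeAChain_sgen r _).mono (by omega)).commute_chainRefl ht htk

theorem commute_rgen_reflU_of_add_two_le {j k : ℕ} (hjk : k + 2 ≤ j) (hj : j ≤ r) :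
    Commute (rgen r j) (reflU r k) := by
  rcases hj.lt_or_eq with hj | rfl
  · rw [rgen_of_pos_of_lt (by omega) hj]
    exact (commute_sgen_reflU_of_far hjk (by omega)).mul_left
      (commute_sgen_reflU_of_far (by omega) (by omega))
  · rw [rgen_self (by omega)]
    have hr := commute_sgen_reflU_of_far (r := j) hjk (by omega)
    exact (hr.mul_left (commute_sgen_reflU_of_far (by omega) (by omega))).mul_left hr

theorem commute_rgen_reflU_of_lt {j k : ℕ} (hjk : j < k) (hk : k < r) :
    Commute (rgen r j) (reflU r k) := by
  have hlow : sgen r j = sgen r (2 * r + 1 - k + (k + j)) := by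
    rw [← sgen_add_period r j]; congr 1; omega
  rcases Nat.eq_zero_or_pos j with rfl | hj
  · rw [rgen_zero, hlow]
    exact commute_sgen_reflU_of_interior hk (by omega) (by omega)
  · rw [rgen_of_pos_of_lt hj (by omega), hlow,
      show 2 * r + 1 - j = 2 * r + 1 - k + (k - j) by omega]
    exact (commute_sgen_reflU_of_interior hk (by omega) (by omega)).mul_left
      (commute_sgen_reflU_of_interior hk (by omega) (by omega))

theorem semiconjBy_rgen_reflU {k : ℕ} (hk : k + 1 < r) :
    SemiconjBy (rgen r (k + 1)) (reflU r k) (reflU r (k + 1)) := by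
  have hp : sgen r (2 * r + 1 - k + (2 * k + 1)) = sgen r (k + 1) := by
    rw [← sgen_add_period r (k + 1)]; congr 1; omega
  set p := sgen r (k + 1)
  set q := sgen r (2 * r + 1 - (k + 1))
  have hpq : Commute p q := by
    have h := (isTypeAChain_sgen r (k + 1)).commute 0 (2 * r - 2 * k - 1) (by omega) (by omega)
    rwa [add_zero, show k + 1 + (2 * r - 2 * k - 1) = 2 * r + 1 - (k + 1) by omega] at h
  have hU : reflU r (k + 1) = q * (p * reflU r k * p) * q := by
    have hchain := (isTypeAChain_sgen r (2 * r + 1 - k)).mono (m := 2 * k + 2) (by omega)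
    rw [reflU, show 2 * (k + 1) = 2 * k + 1 + 1 by omega, chainRefl_succ, add_zero]
    rw [show (fun i => sgen r (2 * r + 1 - (k + 1) + (i + 1))) =
      fun i => sgen r (2 * r + 1 - k + i) from funext fun i => by congr 1; omega]
    rw [hchain.chainRefl_succ_eq_conj, hp, reflU]
  have hinv : (rgen r (k + 1))⁻¹ = q * p := by
    rw [rgen_of_pos_of_lt (by omega) hk, mul_inv_rev, sgen, sgen, (affCS r).inv_simple,
      (affCS r).inv_simple]
    rfl
  convert SemiconjBy.conj_mk (rgen r (k + 1)) (reflU r k) using 1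
  rw [hU, hinv, rgen_of_pos_of_lt (by omega) hk, hpq.eq]
  simp only [mul_assoc]
  rw [hpq.eq]

theorem wordProd_flatten_map_rword (l : List ℕ) :
    (affCS r).wordProd (l.map (rword r)).flatten = (l.map (rgen r)).prod := by
  simp [CoxeterSystem.wordProd, List.map_flatten, List.prod_flatten]
  rfl

theorem fullBlockEl_eq_prod : fullBlockEl r = ((List.range' 0 (r + 1)).map (rgen r)).prod := by
  rw [fullBlockEl, fullBlockWord, wordProd_flatten_map_rword, ascSeq, Nat.sub_zero]

theorem semiconjBy_fullBlockEl_reflU {k : ℕ} (hk : k + 1 < r) :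
    SemiconjBy (fullBlockEl r) (reflU r k) (reflU r (k + 1)) := by
  have hsplit : List.range' 0 (r + 1) =
      List.range' 0 (k + 1) ++ (k + 1) :: List.range' (k + 2) (r - k - 1) := by
    rw [show r + 1 = k + 1 + (r - k - 1 + 1) by omega, ← List.range'_append_1, zero_add,
      List.range'_succ (s := k + 1)]
  rw [fullBlockEl_eq_prod, hsplit, List.map_append, List.prod_append, List.map_cons,
    List.prod_cons]
  have hlow : Commute ((List.range' 0 (k + 1)).map (rgen r)).prod (reflU r (k + 1)) :=
    Commute.list_prod_left _ _ <| by
      simp only [List.mem_map, List.mem_range']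
      rintro _ ⟨j, ⟨i, hi, rfl⟩, rfl⟩
      exact commute_rgen_reflU_of_lt (by omega) hk
  have hhigh : Commute ((List.range' (k + 2) (r - k - 1)).map (rgen r)).prod (reflU r k) :=
    Commute.list_prod_left _ _ <| by
      simp only [List.mem_map, List.mem_range']
      rintro _ ⟨j, ⟨i, hi, rfl⟩, rfl⟩
      exact commute_rgen_reflU_of_add_two_le (by omega) (by omega)
  exact SemiconjBy.mul_left hlow ((semiconjBy_rgen_reflU hk).mul_left hhigh)

theorem semiconjBy_fullBlockEl_pow {e : ℕ} (he : e < r) :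
    SemiconjBy (fullBlockEl r ^ e) (sgen r 0) (reflU r e) := by
  induction e with
  | zero => rw [pow_zero, ← reflU_zero]; exact SemiconjBy.one_left _
  | succ e ih =>
    rw [pow_succ']
    exact (semiconjBy_fullBlockEl_reflU he).mul_left (ih (by omega))

theorem descSeq_one_succ (j : ℕ) : descSeq 1 (j + 1) = (j + 1) :: descSeq 1 j := by
  rw [descSeq, descSeq, Nat.add_sub_cancel, Nat.add_sub_cancel, List.range'_1_concat,
    List.reverse_append, add_comm]
  rfl

theorem semiconjBy_prod_descSeq {j : ℕ} (hj : j < r) :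
    SemiconjBy ((descSeq 1 j).map (rgen r)).prod (sgen r 0) (reflU r j) := by
  induction j with
  | zero => rw [← reflU_zero]; exact SemiconjBy.one_left _
  | succ j ih =>
    rw [descSeq_one_succ, List.map_cons, List.prod_cons]
    exact (semiconjBy_rgen_reflU hj).mul_left (ih (by omega))

end AffineA

/-- For `r ≥ 2`, the element
`(r_0 r_1 ⋯ r_{r-1} r_r)^{-(r-1)} · (r_{r-1} r_{r-2} ⋯ r_1)` of `W` commutes with `s_0`. -/
theorem statement11 (r : ℕ) (hr : 2 ≤ r) :
    (fullBlockEl r ^ (r - 1))⁻¹ * ((descSeq 1 (r - 1)).map (rgen r)).prod * sgen r 0 =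
      sgen r 0 * ((fullBlockEl r ^ (r - 1))⁻¹ * ((descSeq 1 (r - 1)).map (rgen r)).prod) :=
  (semiconjBy_fullBlockEl_pow (by omega)).inv_symm_left.mul_left
    (semiconjBy_prod_descSeq (by omega))
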